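/- arXiv:2006.12535 — 2 statements merged into one kernel-verified Lean document; each statement's English description precedes it below -/
import Mathlib

section
/- Let p be a prime and m, n positive integers with m dividing n and m < n, and regard F_{p^m} as a subfield of F_{p^n}. Let c ∈ F_{p^m}, and let G : F_{p^n} → F_{p^n} be PcN with respect to c. Then F : F_{p^n} → F_{p^m} defined by F(x) = Tr_{F_{p^n}/F_{p^m}}(G(x)) is c-differential bent₁. -/
open Finset

noncomputable section

/-- Finite fields `GaloisField p n` are finite; fix a `Fintype` instance. -/
noncomputable instance (p n : ℕ) [Fact p.Prime] : Fintype (GaloisField p n) :=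
  Fintype.ofFinite _

/-- `ζ_q = exp(2πi/q)`. -/
noncomputable def zetaC (q : ℕ) : ℂ := Complex.exp (2 * Real.pi * Complex.I / q)

/-- `ζ_p^t` for `t ∈ F_p`, computed via the integer lift of `t`. -/
noncomputable def eChar (p : ℕ) (t : ZMod p) : ℂ := zetaC p ^ t.val

/-- The absolute trace `Tr_k : F_{p^k} → F_p`. -/
noncomputable def trAbs (p k : ℕ) [Fact p.Prime] (x : GaloisField p k) : ZMod p :=
  Algebra.trace (ZMod p) (GaloisField p k) x

/-- The Walsh transform `W_F(a,b) = ∑_x ζ_p^{Tr_m(b·F(x)) − Tr_n(a·x)}`. -/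
noncomputable def Walsh (p n m : ℕ) [Fact p.Prime] (F : GaloisField p n → GaloisField p m)
    (a : GaloisField p n) (b : GaloisField p m) : ℂ :=
  ∑ x : GaloisField p n, eChar p (trAbs p m (b * F x) - trAbs p n (a * x))

/-- The `c`-crosscorrelation `cC_{F,G}(u,b) = ∑_z ζ_p^{Tr_m(b(F(z+u) − c·G(z)))}`. -/
noncomputable def crossCorr (p n m : ℕ) [Fact p.Prime]
    (F G : GaloisField p n → GaloisField p m) (c : GaloisField p m)
    (u : GaloisField p n) (b : GaloisField p m) : ℂ :=
  ∑ x : GaloisField p n, eChar p (trAbs p m (b * (F (x + u) - c * G x)))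

/-- The `c`-autocorrelation `cC_F = cC_{F,F}`. -/
noncomputable def autoCorr (p n m : ℕ) [Fact p.Prime]
    (F : GaloisField p n → GaloisField p m) (c : GaloisField p m)
    (u : GaloisField p n) (b : GaloisField p m) : ℂ :=
  crossCorr p n m F F c u b

/-- `F` is perfect₁ `c`-nonlinear: `cC_F(u,b) = 0` for all `u ≠ 0`, `b ≠ 0`. -/
def PerfectCNonlinear1 (p n m : ℕ) [Fact p.Prime]
    (F : GaloisField p n → GaloisField p m) (c : GaloisField p m) : Prop :=
  ∀ u : GaloisField p n, u ≠ 0 → ∀ b : GaloisField p m, b ≠ 0 →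
    autoCorr p n m F c u b = 0

/-- `F` is strictly perfect₁ `c`-nonlinear: `cC_F(u,b) = 0` for all `u`, all `b ≠ 0`. -/
def StrictlyPerfectCNonlinear1 (p n m : ℕ) [Fact p.Prime]
    (F : GaloisField p n → GaloisField p m) (c : GaloisField p m) : Prop :=
  ∀ u : GaloisField p n, ∀ b : GaloisField p m, b ≠ 0 →
    autoCorr p n m F c u b = 0

/-- `F` is `c`-differential bent₁:
`W_F(x,b)·conj(W_F(x,bc)) = cC_F(0,b)` for all `x` and all `b ≠ 0`. -/
def CDifferentialBent1 (p n m : ℕ) [Fact p.Prime]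
    (F : GaloisField p n → GaloisField p m) (c : GaloisField p m) : Prop :=
  ∀ x : GaloisField p n, ∀ b : GaloisField p m, b ≠ 0 →
    Walsh p n m F x b * (starRingEnd ℂ) (Walsh p n m F x (b * c)) =
      autoCorr p n m F c 0 b

/-- `G : F_{p^n} → F_{p^n}` is PcN with respect to `c`: for every `a`
(with `a ≠ 0` required only when `c = 1`), `x ↦ G(x+a) − c·G(x)` is a bijection. -/
def IsPcN (p n : ℕ) [Fact p.Prime] (G : GaloisField p n → GaloisField p n)
    (c : GaloisField p n) : Prop :=
  ∀ a : GaloisField p n, (c = 1 → a ≠ 0) →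
    Function.Bijective fun x => G (x + a) - c * G x

/-!
Via `ι`, `F_{p^n}` is an `F_{p^m}`-algebra and `F` is the relative trace of `G`, so linearity and
transitivity of the trace turn `Tr_m(b(F(x+u) - c F(x)))` into `Tr_n(b(G(x+u) - c G(x)))`. For
`u ≠ 0` the map `x ↦ G(x+u) - c G(x)` is a bijection, so `cC_F(u,b)` becomes the full sum of the
nontrivial character `w ↦ ζ_p^{Tr_n(bw)}` and vanishes. Expanding the product of Walsh values
gives `W_F(x,b) conj W_F(x,bc) = ∑_u cC_F(u,b) ζ_p^{-Tr_n(xu)}`, in which only `u = 0` survives.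
-/

section Character

variable {p : ℕ} [Fact p.Prime]

lemma eChar_eq_stdAddChar (t : ZMod p) : eChar p t = ZMod.stdAddChar t := by
  rw [eChar, zetaC, ZMod.stdAddChar_apply, ZMod.toCircle_apply, ← Complex.exp_nat_mul]
  ring_nf

lemma sum_eChar_trAbs_mul_eq_zero {k : ℕ} {β : GaloisField p k} (hβ : β ≠ 0) :
    ∑ w : GaloisField p k, eChar p (trAbs p k (β * w)) = 0 := by
  let ψ : AddChar (GaloisField p k) ℂ := ZMod.stdAddChar.compAddMonoidHom
    ((Algebra.trace (ZMod p) (GaloisField p k)).toAddMonoidHom.comp (AddMonoidHom.mulLeft β))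
  have hψ : ψ ≠ 1 := by
    obtain ⟨w, hw⟩ : ∃ w, trAbs p k (β * w) ≠ 0 := by
      by_contra! h
      exact hβ ((traceForm_nondegenerate (ZMod p) (GaloisField p k)).1 β h)
    refine AddChar.ne_one_iff.mpr ⟨w, fun h => hw ?_⟩
    rw [← (ZMod.stdAddChar (N := p)).map_zero_eq_one] at h
    exact ZMod.injective_stdAddChar h
  simp only [eChar_eq_stdAddChar]
  exact AddChar.sum_eq_zero_of_ne_one hψ

end Character

section Walsh

variable {p n m : ℕ} [Fact p.Prime] {F : GaloisField p n → GaloisField p m} {c : GaloisField p m}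

theorem walsh_mul_conj_walsh (a : GaloisField p n) (b : GaloisField p m) :
    Walsh p n m F a b * (starRingEnd ℂ) (Walsh p n m F a (b * c)) =
      ∑ u : GaloisField p n, autoCorr p n m F c u b * eChar p (-trAbs p n (a * u)) := by
  simp only [Walsh, autoCorr, crossCorr, eChar_eq_stdAddChar, map_sum,
    ← AddChar.map_neg_eq_conj, mul_sum, sum_mul, ← AddChar.map_add_eq_mul]
  conv_rhs => rw [sum_comm]
  refine sum_congr rfl fun y _ => ?_
  rw [← Equiv.sum_comp (Equiv.addLeft y)]
  refine sum_congr rfl fun u _ => ?_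
  simp only [Equiv.coe_addLeft, trAbs, mul_add, mul_sub, map_add, map_sub]
  ring_nf

theorem CDifferentialBent1.of_perfectCNonlinear1 (h : PerfectCNonlinear1 p n m F c) :
    CDifferentialBent1 p n m F c := by
  intro a b hb
  rw [walsh_mul_conj_walsh, sum_eq_single 0 fun u _ hu => by rw [h u hu b hb, zero_mul]]
  · simp [trAbs, eChar_eq_stdAddChar]
  · simp

end Walsh

section Tower

variable {p m n : ℕ} [Fact p.Prime] [Algebra (GaloisField p m) (GaloisField p n)]

lemma finrank_galoisField_galoisField (hm : m ≠ 0) (hn : n ≠ 0) :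
    Module.finrank (GaloisField p m) (GaloisField p n) = n / m := by
  have h := Module.finrank_mul_finrank (ZMod p) (GaloisField p m) (GaloisField p n)
  rw [GaloisField.finrank p hm, GaloisField.finrank p hn] at h
  exact (Nat.div_eq_of_eq_mul_right (Nat.pos_of_ne_zero hm) h.symm).symm

lemma algebraMap_trace_galoisField (hm : m ≠ 0) (hn : n ≠ 0) (x : GaloisField p n) :
    algebraMap (GaloisField p m) (GaloisField p n)
        (Algebra.trace (GaloisField p m) (GaloisField p n) x) =
      ∑ i ∈ range (n / m), x ^ p ^ (m * i) := by
  simp only [FiniteField.algebraMap_trace_eq_sum_pow, finrank_galoisField_galoisField hm hn,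
    GaloisField.card p m hm, pow_mul]

lemma trAbs_trace (x : GaloisField p n) :
    trAbs p m (Algebra.trace (GaloisField p m) (GaloisField p n) x) = trAbs p n x :=
  Algebra.trace_trace x

theorem PerfectCNonlinear1.of_isPcN {c : GaloisField p m} {G : GaloisField p n → GaloisField p n}
    (hG : IsPcN p n G (algebraMap _ _ c)) {F : GaloisField p n → GaloisField p m}
    (hF : ∀ x, F x = Algebra.trace (GaloisField p m) (GaloisField p n) (G x)) :
    PerfectCNonlinear1 p n m F c := by
  intro u hu b hb
  have hb' : algebraMap (GaloisField p m) (GaloisField p n) b ≠ 0 := (map_ne_zero _).mpr hb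
  have trace_linear (y z : GaloisField p n) :
      b * (Algebra.trace _ _ y - c * Algebra.trace _ _ z) =
        Algebra.trace (GaloisField p m) _ (algebraMap _ _ b * (y - algebraMap _ _ c * z)) := by
    simp only [← Algebra.smul_def, map_smul, map_sub, smul_eq_mul]
  calc autoCorr p n m F c u b
      = ∑ x, eChar p (trAbs p n (algebraMap _ _ b * (G (x + u) - algebraMap _ _ c * G x))) := by
        simp only [autoCorr, crossCorr, hF, trace_linear, trAbs_trace]
    _ = ∑ w, eChar p (trAbs p n (algebraMap _ _ b * w)) :=
        Fintype.sum_bijective _ (hG u fun _ => hu) _ _ fun _ => rfl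
    _ = 0 := sum_eChar_trAbs_mul_eq_zero hb'

end Tower

theorem statement_10_general (p n m : ℕ) [Fact p.Prime] (hm : 0 < m) (hlt : m < n)
    (ι : GaloisField p m →+* GaloisField p n) (c : GaloisField p m)
    (G : GaloisField p n → GaloisField p n) (hG : IsPcN p n G (ι c))
    (F : GaloisField p n → GaloisField p m)
    (hF : ∀ x, ι (F x) = ∑ i ∈ Finset.range (n / m), G x ^ p ^ (m * i)) :
    CDifferentialBent1 p n m F c := by
  let := ι.toAlgebra
  have hn : n ≠ 0 := by omega
  refine .of_perfectCNonlinear1 (.of_isPcN hG fun x => ι.injective ?_)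
  rw [hF]
  exact (algebraMap_trace_galoisField hm.ne' hn (G x)).symm

theorem statement_10 (p n m : ℕ) [Fact p.Prime] (hm : 0 < m) (hmn : m ∣ n) (hlt : m < n)
    (ι : GaloisField p m →+* GaloisField p n) (c : GaloisField p m)
    (G : GaloisField p n → GaloisField p n) (hG : IsPcN p n G (ι c))
    (F : GaloisField p n → GaloisField p m)
    (hF : ∀ x, ι (F x) = ∑ i ∈ Finset.range (n / m), G x ^ p ^ (m * i)) :
    CDifferentialBent1 p n m F c :=
  statement_10_general p n m hm hlt ι c G hG F hF
end
end

section
/- Let 1 ≤ m ≤ n be integers, p a prime, F : F_{p^n} → F_{p^m}, c ∈ F_{p^m} with c ≠ 1, and σ : F_{p^m} → Z/p^mZ any map. Then F is perfect₂ c-nonlinear if and only if F is c-differential bent₂. Moreover, F is strictly perfect₂ c-nonlinear if and only if W_F(x)·conj(W_{cF}(x)) = 0 for all x ∈ F_{p^n}. -/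
/-!
`W_F(a) · conj(W_{cF}(a))` is the Fourier transform of the autocorrelation `u ↦ cC_F(u)` with
respect to the primitive additive character `x ↦ ζ_p^{Tr(x)}` of `F_{p^n}`. By Fourier inversion,
a function vanishes off `0` iff its transform is constant (necessarily equal to its value at `0`),
and it vanishes identically iff its transform does.
-/

open Finset

noncomputable section

/-- `ζ_q^s` for `s ∈ Z/qZ`, computed via the integer lift of `s`. -/
noncomputable def eCharM (q : ℕ) (s : ZMod q) : ℂ := zetaC q ^ s.val

/-- The second-kind Walsh transform
`W_H(a) = ∑_x ζ_{p^m}^{σ(H(x))}·ζ_p^{−Tr_n(a·x)}`. -/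
noncomputable def Walsh2 (p n m : ℕ) [Fact p.Prime] (σ : GaloisField p m → ZMod (p ^ m))
    (H : GaloisField p n → GaloisField p m) (a : GaloisField p n) : ℂ :=
  ∑ x : GaloisField p n, eCharM (p ^ m) (σ (H x)) * eChar p (-(trAbs p n (a * x)))

/-- The second-kind `c`-crosscorrelation
`cC_{F,G}(u) = ∑_x ζ_{p^m}^{σ(F(x+u)) − σ(c·G(x))}`, the difference of exponents
taken in `Z/p^mZ`. -/
noncomputable def crossCorr2 (p n m : ℕ) [Fact p.Prime] (σ : GaloisField p m → ZMod (p ^ m))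
    (F G : GaloisField p n → GaloisField p m) (c : GaloisField p m)
    (u : GaloisField p n) : ℂ :=
  ∑ x : GaloisField p n, eCharM (p ^ m) (σ (F (x + u)) - σ (c * G x))

/-- The second-kind `c`-autocorrelation `cC_F = cC_{F,F}`. -/
noncomputable def autoCorr2 (p n m : ℕ) [Fact p.Prime] (σ : GaloisField p m → ZMod (p ^ m))
    (F : GaloisField p n → GaloisField p m) (c : GaloisField p m)
    (u : GaloisField p n) : ℂ :=
  crossCorr2 p n m σ F F c u

/-- `F` is perfect₂ `c`-nonlinear: `cC_F(u) = 0` for all `u ≠ 0`. -/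
def PerfectCNonlinear2 (p n m : ℕ) [Fact p.Prime] (σ : GaloisField p m → ZMod (p ^ m))
    (F : GaloisField p n → GaloisField p m) (c : GaloisField p m) : Prop :=
  ∀ u : GaloisField p n, u ≠ 0 → autoCorr2 p n m σ F c u = 0

/-- `F` is strictly perfect₂ `c`-nonlinear: additionally `cC_F(0) = 0`. -/
def StrictlyPerfectCNonlinear2 (p n m : ℕ) [Fact p.Prime] (σ : GaloisField p m → ZMod (p ^ m))
    (F : GaloisField p n → GaloisField p m) (c : GaloisField p m) : Prop :=
  PerfectCNonlinear2 p n m σ F c ∧ autoCorr2 p n m σ F c 0 = 0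

/-- `F` is `c`-differential bent₂: `W_F(x)·conj(W_{cF}(x)) = cC_F(0)` for all `x`,
where `cF` is the map `x ↦ c·F(x)`. -/
def CDifferentialBent2 (p n m : ℕ) [Fact p.Prime] (σ : GaloisField p m → ZMod (p ^ m))
    (F : GaloisField p n → GaloisField p m) (c : GaloisField p m) : Prop :=
  ∀ x : GaloisField p n,
    Walsh2 p n m σ F x * (starRingEnd ℂ) (Walsh2 p n m σ (fun y => c * F y) x) =
      autoCorr2 p n m σ F c 0

section CharacterFourier

variable {R : Type*} [CommRing R] [Fintype R] (ψ : AddChar R ℂ)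

def charFourier (f : R → ℂ) (a : R) : ℂ :=
  ∑ u, f u * ψ (-(a * u))

variable {ψ}

theorem sum_charFourier_mul_eq_card_mul (hψ : ψ.IsPrimitive) (f : R → ℂ) (v : R) :
    ∑ a, charFourier ψ f a * ψ (a * v) = Fintype.card R * f v := by
  classical
  calc ∑ a, charFourier ψ f a * ψ (a * v)
      = ∑ u, f u * ∑ a, ψ (a * (v - u)) := by
        simp only [charFourier, sum_mul, mul_sum]
        rw [sum_comm]
        refine sum_congr rfl fun u _ => sum_congr rfl fun a _ => ?_
        rw [mul_sub, sub_eq_neg_add, AddChar.map_add_eq_mul, mul_assoc, mul_comm (ψ _)]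
    _ = Fintype.card R * f v := by
        simp only [AddChar.sum_mulShift _ hψ, sub_eq_zero, Nat.cast_ite, Nat.cast_zero, mul_ite,
          mul_zero, sum_ite_eq, mem_univ, if_true]
        exact mul_comm _ _

theorem charFourier_eq_const_iff (hψ : ψ.IsPrimitive) (f : R → ℂ) :
    (∀ a, charFourier ψ f a = f 0) ↔ ∀ u ≠ 0, f u = 0 := by
  classical
  constructor
  · intro hconst u hu
    have hinv := sum_charFourier_mul_eq_card_mul hψ f u
    simp only [hconst, ← mul_sum, AddChar.sum_mulShift _ hψ, if_neg hu, Nat.cast_zero,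
      mul_zero] at hinv
    exact (mul_eq_zero.mp hinv.symm).resolve_left (Nat.cast_ne_zero.mpr Fintype.card_ne_zero)
  · intro hsupp a
    rw [charFourier, sum_eq_single 0 (fun u _ hu => by rw [hsupp u hu, zero_mul])
      (fun h => absurd (mem_univ 0) h), mul_zero, neg_zero, AddChar.map_zero_eq_one, mul_one]

theorem charFourier_eq_zero_iff (hψ : ψ.IsPrimitive) (f : R → ℂ) :
    (∀ a, charFourier ψ f a = 0) ↔ ∀ u, f u = 0 := by
  constructor
  · intro hzero u
    have hinv := sum_charFourier_mul_eq_card_mul hψ f u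
    simp only [hzero, zero_mul, sum_const_zero] at hinv
    exact (mul_eq_zero.mp hinv.symm).resolve_left (Nat.cast_ne_zero.mpr Fintype.card_ne_zero)
  · intro hf a
    simp [charFourier, hf]

end CharacterFourier

theorem charSum_mul_conj_charSum {R G : Type*} [CommRing R] [Fintype R] [AddCommGroup G]
    [Finite G] (ψ : AddChar R ℂ) (χ : AddChar G ℂ) (g h : R → G) (a : R) :
    (∑ x, χ (g x) * ψ (-(a * x))) * starRingEnd ℂ (∑ y, χ (h y) * ψ (-(a * y))) =
      charFourier ψ (fun u => ∑ y, χ (g (y + u) - h y)) a := by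
  rw [map_sum, sum_mul_sum, sum_comm, charFourier]
  simp only [sum_mul]
  conv_rhs => rw [sum_comm]
  refine sum_congr rfl fun y _ => ?_
  refine (Fintype.sum_equiv (Equiv.addLeft y) _ _ fun u => ?_).symm
  simp only [Equiv.coe_addLeft, map_mul, ← AddChar.map_neg_eq_conj, neg_neg, sub_eq_add_neg,
    AddChar.map_add_eq_mul, mul_add, neg_add]
  have hψ : ψ (-(a * y)) * ψ (a * y) = 1 := by
    rw [← AddChar.map_add_eq_mul, neg_add_cancel, AddChar.map_zero_eq_one]
  linear_combination (-(χ (g (y + u)) * χ (-h y) * ψ (-(a * u)))) * hψ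

theorem zetaC_isPrimitiveRoot (q : ℕ) [NeZero q] : IsPrimitiveRoot (zetaC q) q := by
  simpa [zetaC] using Complex.isPrimitiveRoot_exp q (NeZero.ne q)

def stdChar (q : ℕ) [NeZero q] : AddChar (ZMod q) ℂ :=
  AddChar.zmodChar q (zetaC_isPrimitiveRoot q).pow_eq_one

theorem stdChar_isPrimitive (q : ℕ) [NeZero q] : (stdChar q).IsPrimitive :=
  AddChar.zmodChar_primitive_of_primitive_root q (zetaC_isPrimitiveRoot q)

theorem eCharM_eq_stdChar (q : ℕ) [NeZero q] (s : ZMod q) : eCharM q s = stdChar q s := rfl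

def traceChar (p : ℕ) [Fact p.Prime] (L : Type*) [Field L] [Finite L] [Algebra (ZMod p) L] :
    AddChar L ℂ :=
  (stdChar p).compAddMonoidHom (Algebra.trace (ZMod p) L).toAddMonoidHom

theorem traceChar_isPrimitive (p : ℕ) [Fact p.Prime] (L : Type*) [Field L] [Finite L]
    [Algebra (ZMod p) L] : (traceChar p L).IsPrimitive := by
  refine AddChar.IsPrimitive.of_ne_one fun htriv => ?_
  obtain ⟨x, hx⟩ := Algebra.trace_surjective (ZMod p) L 1
  have h1 : stdChar p 1 = 1 := by
    simpa [traceChar, hx] using DFunLike.congr_fun htriv x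
  exact one_ne_zero (((stdChar_isPrimitive p).zmod_char_eq_one_iff p 1).mp h1)

theorem eChar_neg_trAbs_eq_traceChar (p n : ℕ) [Fact p.Prime] (x : GaloisField p n) :
    eChar p (-(trAbs p n x)) = traceChar p (GaloisField p n) (-x) := by
  simp [traceChar, trAbs, eChar, stdChar, AddChar.zmodChar_apply]

theorem walsh2_mul_conj_walsh2_eq_charFourier (p n m : ℕ) [Fact p.Prime]
    (σ : GaloisField p m → ZMod (p ^ m)) (F : GaloisField p n → GaloisField p m)
    (c : GaloisField p m) (a : GaloisField p n) :
    Walsh2 p n m σ F a * starRingEnd ℂ (Walsh2 p n m σ (fun y => c * F y) a) =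
      charFourier (traceChar p (GaloisField p n)) (autoCorr2 p n m σ F c) a := by
  simp only [Walsh2, eCharM_eq_stdChar, eChar_neg_trAbs_eq_traceChar]
  exact charSum_mul_conj_charSum _ _ _ _ a

theorem statement_15_general (p n m : ℕ) [Fact p.Prime]
    (F : GaloisField p n → GaloisField p m) (c : GaloisField p m)
    (σ : GaloisField p m → ZMod (p ^ m)) :
    (PerfectCNonlinear2 p n m σ F c ↔ CDifferentialBent2 p n m σ F c) ∧
    (StrictlyPerfectCNonlinear2 p n m σ F c ↔
      ∀ x : GaloisField p n,
        Walsh2 p n m σ F x *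
          (starRingEnd ℂ) (Walsh2 p n m σ (fun y => c * F y) x) = 0) := by
  have hψ := traceChar_isPrimitive p (GaloisField p n)
  simp only [PerfectCNonlinear2, CDifferentialBent2, StrictlyPerfectCNonlinear2,
    walsh2_mul_conj_walsh2_eq_charFourier, charFourier_eq_zero_iff hψ]
  refine ⟨(charFourier_eq_const_iff hψ _).symm, ?_⟩
  refine ⟨fun ⟨hsupp, h0⟩ u => ?_, fun hzero => ⟨fun u _ => hzero u, hzero 0⟩⟩
  by_cases hu : u = 0
  · rw [hu, h0]
  · exact hsupp u hu

theorem statement_15 (p n m : ℕ) [Fact p.Prime] (hm : 1 ≤ m) (hmn : m ≤ n)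
    (F : GaloisField p n → GaloisField p m) (c : GaloisField p m) (hc : c ≠ 1)
    (σ : GaloisField p m → ZMod (p ^ m)) :
    (PerfectCNonlinear2 p n m σ F c ↔ CDifferentialBent2 p n m σ F c) ∧
    (StrictlyPerfectCNonlinear2 p n m σ F c ↔
      ∀ x : GaloisField p n,
        Walsh2 p n m σ F x *
          (starRingEnd ℂ) (Walsh2 p n m σ (fun y => c * F y) x) = 0) :=
  statement_15_general p n m F c σ
end
end
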